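/- Let k > 3 and 1 ≤ n < 2k − 1. Then the poset Σ_{n,k} is order-isomorphic to the poset {A ⊆ [n] : |A| ≥ k} ∪ {∅} of subsets of [n] of cardinality at least k together with the empty set, ordered by inclusion. -/

import Mathlib

open Finset

def graphOf (n : ℕ) (E : Finset (Finset (Fin n))) : SimpleGraph (Fin n) where
  Adj u v := u ≠ v ∧ ({u, v} : Finset (Fin n)) ∈ E
  symm := by
    constructor
    rintro u v ⟨h1, h2⟩
    exact ⟨h1.symm, by rwa [Finset.pair_comm]⟩
  loopless := ⟨fun u h => h.1 rfl⟩

def IsGraphEdges (n : ℕ) (E : Finset (Finset (Fin n))) : Prop := ∀ e ∈ E, e.card = 2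

def IsTwoConn {V : Type} [Fintype V] (G : SimpleGraph V) : Prop :=
  2 ≤ Fintype.card V ∧ G.Connected ∧
    ∀ v : V, (G.induce ({v}ᶜ : Set V)).Connected

def BlockCand {V : Type} (G : SimpleGraph V) (W : Finset V) : Prop :=
  W.card = 1 ∨ IsTwoConn (G.induce (W : Set V))

def IsBlock {V : Type} (G : SimpleGraph V) (W : Finset V) : Prop :=
  BlockCand G W ∧ ∀ W' : Finset V, W ⊂ W' → ¬ BlockCand G W'

def InSigma (n k : ℕ) (E : Finset (Finset (Fin n))) : Prop :=
  IsGraphEdges n E ∧ ∀ W : Finset (Fin n), IsBlock (graphOf n E) W →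
    W.card = 1 ∨ (k ≤ W.card ∧ (graphOf n E).IsClique (W : Set (Fin n)))

/-!
Every block of a graph in `Σ_{n,k}` with at least two vertices is a clique on at least `k`
vertices. Two such blocks share at least `2k - n ≥ 2` vertices, so their union is again
2-connected and maximality forces them to coincide. Every edge lies in such a block, hence a
nonempty graph in `Σ_{n,k}` is the complete graph on a single set `A` with `|A| ≥ k`, and
`A ↦ (pairs of A)` is the order isomorphism.
-/

open SimpleGraph

lemma SimpleGraph.connected_of_forall_adj {V : Type} (H : SimpleGraph V) (c : V)
    (h : ∀ v, v ≠ c → H.Adj c v) : H.Connected := by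
  refine H.connected_iff_exists_forall_reachable.2 ⟨c, fun v => ?_⟩
  obtain rfl | hv := eq_or_ne v c
  exacts [.rfl, (h v hv).reachable]

section TwoConnected

variable {V : Type} {G : SimpleGraph V} {W : Finset V}

lemma two_le_card_of_isTwoConn_induce (h : IsTwoConn (G.induce (W : Set V))) : 2 ≤ #W := by
  simpa using h.1

lemma IsTwoConn.exists_adj (h : IsTwoConn (G.induce (W : Set V))) {v : V} (hv : v ∈ W) :
    ∃ u, G.Adj v u := by
  have : Nontrivial (W : Set V) := Fintype.one_lt_card_iff_nontrivial.mp h.1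
  obtain ⟨u, hu⟩ := h.2.1.preconnected.exists_adj_of_nontrivial ⟨v, hv⟩
  exact ⟨u, hu⟩

lemma isTwoConn_induce_of_hubs {a b : V} (ha : a ∈ W) (hb : b ∈ W) (hab : a ≠ b)
    (hhub : ∀ c, c = a ∨ c = b → ∀ v ∈ W, v ≠ c → G.Adj c v) :
    IsTwoConn (G.induce (W : Set V)) := by
  refine ⟨Fintype.one_lt_card_iff.mpr ⟨⟨a, ha⟩, ⟨b, hb⟩, by simpa using hab⟩, ?_, fun v => ?_⟩
  · refine connected_of_forall_adj _ ⟨a, ha⟩ fun v hv => ?_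
    simpa using hhub a (.inl rfl) v v.2 (by simpa [Subtype.ext_iff] using hv)
  · obtain ⟨c, hc, hcv⟩ : ∃ c, (c = a ∨ c = b) ∧ c ≠ v := by
      by_cases hva : (v : V) = a
      · exact ⟨b, .inr rfl, by rintro rfl; exact hab hva.symm⟩
      · exact ⟨a, .inl rfl, fun h => hva h.symm⟩
    have hcW : c ∈ W := by rcases hc with rfl | rfl <;> assumption
    refine connected_of_forall_adj _ ⟨⟨c, hcW⟩, by simpa [Subtype.ext_iff] using hcv⟩ fun u hu => ?_
    simpa using hhub c hc u.1 u.1.2 (by simpa [Subtype.ext_iff] using hu)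

lemma isTwoConn_induce_of_isClique (hW : G.IsClique (W : Set V)) (h : 1 < #W) :
    IsTwoConn (G.induce (W : Set V)) := by
  obtain ⟨a, ha, b, hb, hab⟩ := one_lt_card.mp h
  refine isTwoConn_induce_of_hubs ha hb hab fun c hc v hv hvc => hW ?_ (mem_coe.2 hv) hvc.symm
  rcases hc with rfl | rfl <;> assumption

lemma isTwoConn_induce_union_of_isClique [DecidableEq V] {s t : Finset V}
    (hs : G.IsClique (s : Set V)) (ht : G.IsClique (t : Set V)) (h : 1 < #(s ∩ t)) :
    IsTwoConn (G.induce ((s ∪ t : Finset V) : Set V)) := by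
  obtain ⟨a, ha, b, hb, hab⟩ := one_lt_card.mp h
  refine isTwoConn_induce_of_hubs (mem_union_left t (mem_inter.1 ha).1)
    (mem_union_left t (mem_inter.1 hb).1) hab fun c hc v hv hvc => ?_
  have hc : c ∈ s ∩ t := by rcases hc with rfl | rfl <;> assumption
  rcases mem_union.1 hv with hv | hv
  exacts [hs (mem_inter.1 hc).1 hv hvc.symm, ht (mem_inter.1 hc).2 hv hvc.symm]

end TwoConnected

section Blocks

variable {V : Type} {G : SimpleGraph V} {W W' : Finset V}

lemma exists_isBlock_superset [Finite V] (h : BlockCand G W) : ∃ B, W ⊆ B ∧ IsBlock G B := by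
  obtain ⟨B, hWB, hB⟩ := Finite.exists_le_maximal h
  exact ⟨B, hWB, hB.1, fun W' hBW' hW' => hBW'.not_ge (hB.2 hW' hBW'.le)⟩

lemma IsBlock.eq_of_subset (hW : IsBlock G W) (h : W ⊆ W') (hW' : BlockCand G W') : W = W' :=
  by_contra fun hne => hW.2 W' (h.ssubset_of_ne hne) hW'

lemma IsBlock.eq_of_isClique [DecidableEq V] (hW : IsBlock G W) (hW' : IsBlock G W')
    (hc : G.IsClique (W : Set V)) (hc' : G.IsClique (W' : Set V)) (h : 1 < #(W ∩ W')) :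
    W = W' := by
  have hU : BlockCand G (W ∪ W') := .inr (isTwoConn_induce_union_of_isClique hc hc' h)
  exact (hW.eq_of_subset subset_union_left hU).trans (hW'.eq_of_subset subset_union_right hU).symm

end Blocks

lemma powersetCard_two_subset_powersetCard_two_iff {α : Type*} {A B : Finset α} (hA : #A ≠ 1) :
    A.powersetCard 2 ⊆ B.powersetCard 2 ↔ A ⊆ B := by
  refine ⟨fun h a ha => ?_, powersetCard_mono⟩
  classical
  obtain ⟨b, hb, hba⟩ := exists_mem_ne (s := A) (by have : 0 < #A := card_pos.2 ⟨a, ha⟩; omega) a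
  have hab : {a, b} ∈ A.powersetCard 2 :=
    mem_powersetCard.2 ⟨insert_subset ha (singleton_subset_iff.2 hb), card_pair hba.symm⟩
  exact (mem_powersetCard.1 (h hab)).1 (mem_insert_self a {b})

section Sigma

variable {n k : ℕ} {E : Finset (Finset (Fin n))}

lemma InSigma.exists_isBlock_of_mem (hE : InSigma n k E) {e : Finset (Fin n)} (he : e ∈ E) :
    ∃ W, e ⊆ W ∧ IsBlock (graphOf n E) W ∧ k ≤ #W ∧
      (graphOf n E).IsClique (W : Set (Fin n)) := by
  obtain ⟨u, v, huv, rfl⟩ := card_eq_two.mp (hE.1 _ he)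
  have hcl : (graphOf n E).IsClique (({u, v} : Finset (Fin n)) : Set (Fin n)) := by
    rw [coe_pair, isClique_pair]
    exact fun _ => ⟨huv, he⟩
  obtain ⟨W, huvW, hW⟩ := exists_isBlock_superset
    (.inr (isTwoConn_induce_of_isClique hcl (by rw [card_pair huv]; omega)))
  have : 2 ≤ #W := card_pair huv ▸ card_le_card huvW
  exact ⟨W, huvW, hW, (hE.2 W hW).resolve_left (by omega)⟩

lemma InSigma.exists_eq_powersetCard_two (hE : InSigma n k E) (hn : n + 2 ≤ 2 * k) :
    ∃ A : Finset (Fin n), (k ≤ #A ∨ A = ∅) ∧ E = A.powersetCard 2 := by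
  obtain rfl | ⟨e₀, he₀⟩ := E.eq_empty_or_nonempty
  · exact ⟨∅, .inr rfl, (powersetCard_eq_empty.2 (by simp)).symm⟩
  obtain ⟨W₀, -, hW₀, hkW₀, hcl₀⟩ := hE.exists_isBlock_of_mem he₀
  refine ⟨W₀, .inl hkW₀, ext fun e => ⟨fun he => ?_, fun he => ?_⟩⟩
  · obtain ⟨W, heW, hW, hkW, hcl⟩ := hE.exists_isBlock_of_mem he
    have hinter : 1 < #(W ∩ W₀) := by
      have := card_union_add_card_inter W W₀
      have : #(W ∪ W₀) ≤ n := card_le_univ (W ∪ W₀) |>.trans_eq (Fintype.card_fin n)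
      omega
    rw [← hW.eq_of_isClique hW₀ hcl hcl₀ hinter]
    exact mem_powersetCard.2 ⟨heW, hE.1 e he⟩
  · obtain ⟨heW₀, he⟩ := mem_powersetCard.1 he
    obtain ⟨u, v, huv, rfl⟩ := card_eq_two.mp he
    exact (hcl₀ (heW₀ (mem_insert_self u {v})) (heW₀ (mem_insert_of_mem (mem_singleton_self v)))
      huv).2

lemma graphOf_powersetCard_two_adj {A : Finset (Fin n)} {u v : Fin n} :
    (graphOf n (A.powersetCard 2)).Adj u v ↔ u ≠ v ∧ u ∈ A ∧ v ∈ A := by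
  simp only [graphOf, mem_powersetCard, insert_subset_iff, singleton_subset_iff]
  constructor
  · rintro ⟨huv, ⟨hu, hv⟩, -⟩
    exact ⟨huv, hu, hv⟩
  · rintro ⟨huv, hu, hv⟩
    exact ⟨huv, ⟨hu, hv⟩, card_pair huv⟩

lemma inSigma_powersetCard_two (hk : 2 ≤ k) {A : Finset (Fin n)} (hA : k ≤ #A ∨ A = ∅) :
    InSigma n k (A.powersetCard 2) := by
  refine ⟨fun e he => (mem_powersetCard.1 he).2, fun W hW => or_iff_not_imp_left.2 fun hW1 => ?_⟩
  have hconn := hW.1.resolve_left hW1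
  have hWA : W ⊆ A := fun v hv => by
    obtain ⟨u, hvu⟩ := hconn.exists_adj hv
    exact (graphOf_powersetCard_two_adj.1 hvu).2.1
  have hW2 := two_le_card_of_isTwoConn_induce hconn
  have hkA : k ≤ #A := hA.resolve_right fun hA0 => by
    have := card_le_card hWA
    simp only [hA0, card_empty] at this
    omega
  have hclA : (graphOf n (A.powersetCard 2)).IsClique (A : Set (Fin n)) :=
    fun u hu v hv huv => graphOf_powersetCard_two_adj.2 ⟨huv, hu, hv⟩
  obtain rfl := hW.eq_of_subset hWA (.inr (isTwoConn_induce_of_isClique hclA (by omega)))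
  exact ⟨hkA, hclA⟩

end Sigma

theorem sigma_iso_truncated_boolean_general (n k : ℕ) (hk : 3 < k)
    (hn2 : n < 2 * k - 1) :
    Nonempty ({E : Finset (Finset (Fin n)) // InSigma n k E} ≃o
      {A : Finset (Fin n) // k ≤ A.card ∨ A = ∅}) := by
  have hk2 : 2 ≤ k := by omega
  let f : {A : Finset (Fin n) // k ≤ A.card ∨ A = ∅} ↪o {E // InSigma n k E} :=
    OrderEmbedding.ofMapLEIff (fun A => ⟨A.1.powersetCard 2, inSigma_powersetCard_two hk2 A.2⟩)
      fun A B => powersetCard_two_subset_powersetCard_two_iff <| by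
        rcases A.2 with h | h
        · omega
        · simp [h]
  have hf : Function.Surjective f := fun E => by
    obtain ⟨A, hA, hE⟩ := E.2.exists_eq_powersetCard_two (by omega)
    exact ⟨⟨A, hA⟩, Subtype.ext hE.symm⟩
  exact ⟨(OrderIso.ofSurjective f hf).symm⟩

/-- For `k > 3` and `n < 2k-1`, the poset `Σ_{n,k}` is order-isomorphic to the
lower-truncated Boolean algebra `{A ⊆ [n] : |A| ≥ k} ∪ {∅}` ordered by inclusion. -/
theorem sigma_iso_truncated_boolean (n k : ℕ) (hk : 3 < k) (hn1 : 1 ≤ n)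
    (hn2 : n < 2 * k - 1) :
    Nonempty ({E : Finset (Finset (Fin n)) // InSigma n k E} ≃o
      {A : Finset (Fin n) // k ≤ A.card ∨ A = ∅}) :=
  sigma_iso_truncated_boolean_general n k hk hn2
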